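/- arXiv:1703.05564 — 6 statements merged into one kernel-verified Lean document; each statement's English description precedes it below -/
import Mathlib

section
/- Let N ≥ 3 and let x_1, …, x_N be points in ℝ^d with barycentre μ = N^{-1}·Σ_{i=1}^N x_i. For an index l, removing x_l from the configuration yields the minimal value of G_{N-1} among all (N-1)-element sub-configurations of (x_1,…,x_N) if and only if ‖x_l − μ‖ = max_{1≤j≤N} ‖x_j − μ‖; equivalently, for any indices l, j, if ‖x_l − μ‖ ≥ ‖x_j − μ‖ then G_{N-1} of the configuration with x_l removed is less than or equal to G_{N-1} of the configuration with x_j removed. -/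
open MeasureTheory Filter Metric
open scoped Classical

noncomputable section

/-- The energy `G_n` of a finite configuration of points (given as a multiset):
the sum of the squared distances from the points to their barycentre. -/
def energy {E : Type*} [NormedAddCommGroup E] [NormedSpace ℝ E] (s : Multiset E) : ℝ :=
  (s.map fun x => ‖x - (s.card : ℝ)⁻¹ • s.sum‖ ^ 2).sum

/-!
Removing a point `a` from a configuration of `n ≥ 2` points with barycentre `μ` lowers the
energy by exactly `n / (n - 1) * ‖a - μ‖²`, as one sees by expanding both energies with the
König–Huygens formula `G = ∑ ‖xᵢ‖² - ‖∑ xᵢ‖² / n`. So the energies of the `(n - 1)`-point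
subconfigurations, each of which omits a single point, are ordered opposite to the distances
of the omitted points from `μ`.
-/

open scoped RealInnerProductSpace

theorem Multiset.exists_eq_erase_of_le_of_card_add_one {α : Type*} [DecidableEq α]
    {s t : Multiset α} (h : s ≤ t) (hc : s.card + 1 = t.card) : ∃ a ∈ t, s = t.erase a := by
  obtain ⟨a, hu⟩ := Multiset.card_eq_one.mp
    (show (t - s).card = 1 by rw [Multiset.card_sub h]; omega)
  have ht : t = a ::ₘ s := by
    rw [← tsub_add_cancel_of_le h, hu, Multiset.singleton_add]
  exact ⟨a, ht ▸ Multiset.mem_cons_self a s, by rw [ht, Multiset.erase_cons_head]⟩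

section Energy

variable {E : Type*} [NormedAddCommGroup E] [InnerProductSpace ℝ E]

theorem sum_map_norm_sub_sq (s : Multiset E) (c : E) :
    (s.map fun y => ‖y - c‖ ^ 2).sum
      = (s.map fun y => ‖y‖ ^ 2).sum - 2 * ⟪s.sum, c⟫ + s.card * ‖c‖ ^ 2 := by
  induction s using Multiset.induction with
  | empty => simp
  | cons a s ih =>
    rw [Multiset.map_cons, Multiset.sum_cons, ih, norm_sub_sq_real, Multiset.map_cons,
      Multiset.sum_cons, Multiset.sum_cons, inner_add_left, Multiset.card_cons]
    push_cast
    ring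

theorem energy_eq_sum_norm_sq_sub (s : Multiset E) :
    energy s = (s.map fun y => ‖y‖ ^ 2).sum - ‖s.sum‖ ^ 2 / s.card := by
  rcases Multiset.empty_or_exists_mem s with rfl | ⟨a, ha⟩
  · simp [energy]
  have hn : (s.card : ℝ) ≠ 0 := by
    exact_mod_cast (Multiset.card_pos_iff_exists_mem.mpr ⟨a, ha⟩).ne'
  rw [energy, sum_map_norm_sub_sq, inner_smul_right, real_inner_self_eq_norm_sq, norm_smul,
    Real.norm_eq_abs, mul_pow, sq_abs]
  field_simp
  ring

theorem energy_erase [DecidableEq E] {s : Multiset E} {a : E} (ha : a ∈ s) (hs : 2 ≤ s.card) :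
    energy (s.erase a)
      = energy s - s.card / (s.card - 1) * ‖a - (s.card : ℝ)⁻¹ • s.sum‖ ^ 2 := by
  obtain ⟨t, rfl⟩ := Multiset.exists_cons_of_mem ha
  have ht : (t.card : ℝ) ≠ 0 := by
    rw [Multiset.card_cons] at hs
    exact_mod_cast (by omega : t.card ≠ 0)
  rw [Multiset.erase_cons_head, energy_eq_sum_norm_sq_sub, energy_eq_sum_norm_sq_sub]
  simp only [Multiset.map_cons, Multiset.sum_cons, Multiset.card_cons, norm_sub_sq_real,
    norm_add_sq_real, inner_smul_right, inner_add_right, norm_smul, Real.norm_eq_abs, mul_pow,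
    sq_abs, real_inner_self_eq_norm_sq]
  push_cast
  rw [add_sub_cancel_right]
  field_simp
  ring

theorem energy_erase_le_energy_erase_iff [DecidableEq E] {s : Multiset E} {a b : E}
    (ha : a ∈ s) (hb : b ∈ s) (hs : 2 ≤ s.card) :
    energy (s.erase a) ≤ energy (s.erase b)
      ↔ ‖b - (s.card : ℝ)⁻¹ • s.sum‖ ≤ ‖a - (s.card : ℝ)⁻¹ • s.sum‖ := by
  have hs' : (2 : ℝ) ≤ s.card := by exact_mod_cast hs
  rw [energy_erase ha hs, energy_erase hb hs, sub_le_sub_iff_left,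
    mul_le_mul_iff_right₀ (by apply div_pos <;> linarith),
    pow_le_pow_iff_left₀ (norm_nonneg _) (norm_nonneg _) two_ne_zero]

end Energy

/-- For `N ≥ 3` points in `ℝ^d` with barycentre `μ`, removing `x l` minimizes `G_{N-1}`
over all `(N-1)`-element sub-configurations iff `‖x l - μ‖` is maximal; equivalently,
if `‖x l - μ‖ ≥ ‖x j - μ‖` then the energy after removing `x l` is at most the energy
after removing `x j`. -/
theorem stmt0 {d N : ℕ} (hN : 3 ≤ N) (x : Fin N → EuclideanSpace ℝ (Fin d)) :
    (∀ l : Fin N,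
      (∀ s : Multiset (EuclideanSpace ℝ (Fin d)), s ≤ ↑(List.ofFn x) → s.card = N - 1 →
          energy ((↑(List.ofFn x) : Multiset _).erase (x l)) ≤ energy s) ↔
        (∀ j : Fin N, ‖x j - (N : ℝ)⁻¹ • ∑ i, x i‖ ≤ ‖x l - (N : ℝ)⁻¹ • ∑ i, x i‖)) ∧
    (∀ l j : Fin N, ‖x j - (N : ℝ)⁻¹ • ∑ i, x i‖ ≤ ‖x l - (N : ℝ)⁻¹ • ∑ i, x i‖ →
      energy ((↑(List.ofFn x) : Multiset _).erase (x l)) ≤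
        energy ((↑(List.ofFn x) : Multiset _).erase (x j))) := by
  set t : Multiset (EuclideanSpace ℝ (Fin d)) := ↑(List.ofFn x) with ht
  have hcard : t.card = N := by simp [ht]
  have hsum : t.sum = ∑ i, x i := by rw [ht, Multiset.sum_coe, List.sum_ofFn]
  have hmem (l : Fin N) : x l ∈ t := Multiset.mem_coe.mpr (List.mem_ofFn.mpr ⟨l, rfl⟩)
  have key (l j : Fin N) : energy (t.erase (x l)) ≤ energy (t.erase (x j)) ↔
      ‖x j - (N : ℝ)⁻¹ • ∑ i, x i‖ ≤ ‖x l - (N : ℝ)⁻¹ • ∑ i, x i‖ := by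
    rw [energy_erase_le_energy_erase_iff (hmem l) (hmem j) (by omega), hcard, hsum]
  refine ⟨fun l => ⟨fun hmin j => (key l j).mp ?_, fun hmax s hs hs_card => ?_⟩,
    fun l j => (key l j).mpr⟩
  · exact hmin _ (Multiset.erase_le _ _)
      (by rw [Multiset.card_erase_of_mem (hmem j), hcard]; rfl)
  · obtain ⟨a, hat, rfl⟩ := Multiset.exists_eq_erase_of_le_of_card_add_one hs (by omega)
    obtain ⟨j, rfl⟩ := List.mem_ofFn.mp (Multiset.mem_coe.mp hat)
    exact (key l j).mpr (hmax j)
end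
end

section
/- Let ζ be a probability distribution on ℝ^d. The support of ζ is bounded if and only if there exists a function f : (0,∞) → (0,∞) such that P(ζ ∈ B_δ(x)) ≥ f(δ) for every x ∈ supp ζ and every δ > 0. -/
open MeasureTheory Filter Metric

noncomputable section

/-- The support of a measure: the points all of whose open balls have positive measure. -/
def msupport {E : Type*} [PseudoMetricSpace E] [MeasurableSpace E] (ζ : Measure E) :
    Set E :=
  {x | ∀ ε > 0, 0 < ζ (Metric.ball x ε)}

lemma msupport_isClosed {E : Type*} [PseudoMetricSpace E] [MeasurableSpace E]
    (ζ : Measure E) : IsClosed (msupport ζ) := by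
  rw [← isOpen_compl_iff, Metric.isOpen_iff]
  intro x hx
  simp only [Set.mem_compl_iff, msupport, Set.mem_setOf_eq, not_forall] at hx
  obtain ⟨ε, hε, hζ⟩ := hx
  push_neg at hζ
  refine ⟨ε / 2, by linarith, fun y hy => ?_⟩
  simp only [Set.mem_compl_iff, msupport, Set.mem_setOf_eq, not_forall]
  refine ⟨ε / 2, by linarith, ?_⟩
  have hsub : Metric.ball y (ε / 2) ⊆ Metric.ball x ε := by
    intro z hz
    have := Metric.mem_ball.1 hz
    have hxy := Metric.mem_ball.1 hy
    rw [Metric.mem_ball]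
    calc dist z x ≤ dist z y + dist y x := dist_triangle _ _ _
    _ < ε / 2 + ε / 2 := by linarith
    _ = ε := by ring
  have := measure_mono hsub (μ := ζ)
  exact not_lt.2 (this.trans hζ)

/-- The support of a probability distribution `ζ` on `ℝ^d` is bounded iff there is a function
`f : (0,∞) → (0,∞)` such that `P(ζ ∈ B_δ(x)) ≥ f δ` for every `x ∈ supp ζ` and `δ > 0`. -/
theorem stmt4 {d : ℕ} (ζ : Measure (EuclideanSpace ℝ (Fin d))) [IsProbabilityMeasure ζ] :
    Bornology.IsBounded (msupport ζ) ↔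
      ∃ f : ℝ → ℝ, (∀ δ > 0, 0 < f δ) ∧
        ∀ x ∈ msupport ζ, ∀ δ > 0, ENNReal.ofReal (f δ) ≤ ζ (Metric.ball x δ) := by
  constructor
  · intro hb
    have hcomp : IsCompact (msupport ζ) :=
      Metric.isCompact_of_isClosed_isBounded (msupport_isClosed ζ) hb
    have key : ∀ δ : ℝ, 0 < δ → ∃ c : ℝ, 0 < c ∧
        ∀ x ∈ msupport ζ, ENNReal.ofReal c ≤ ζ (Metric.ball x δ) := by
      intro δ hδ
      have hcover : msupport ζ ⊆ ⋃ y ∈ msupport ζ, Metric.ball y (δ / 2) := by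
        intro x hx
        exact Set.mem_biUnion hx (Metric.mem_ball_self (by linarith))
      obtain ⟨t, hts, htfin, hsub⟩ := hcomp.elim_finite_subcover_image
        (fun y _ => Metric.isOpen_ball) hcover
      rcases t.eq_empty_or_nonempty with rfl | hne
      · refine ⟨1, one_pos, fun x hx => absurd (hsub hx) ?_⟩
        simp
      · lift t to Finset (EuclideanSpace ℝ (Fin d)) using htfin with t ht
        have hne' : t.Nonempty := by simpa [Finset.coe_nonempty] using hne
        set m : ENNReal := t.inf' hne' (fun y => ζ (Metric.ball y (δ / 2))) with hm
        have hmpos : 0 < m := by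
          rw [hm, Finset.lt_inf'_iff]
          intro y hy
          exact (hts hy) (δ / 2) (by linarith)
        have hmne : m ≠ ⊤ := by
          obtain ⟨y, hy⟩ := hne'
          have : m ≤ ζ (Metric.ball y (δ / 2)) := Finset.inf'_le _ hy
          exact ne_top_of_le_ne_top (measure_ne_top ζ _) this
        refine ⟨m.toReal, ENNReal.toReal_pos hmpos.ne' hmne, fun x hx => ?_⟩
        rw [ENNReal.ofReal_toReal hmne]
        obtain ⟨y, hy, hxy⟩ := Set.mem_iUnion₂.1 (hsub hx)
        have hsub' : Metric.ball y (δ / 2) ⊆ Metric.ball x δ := by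
          intro z hz
          have h1 := Metric.mem_ball.1 hz
          have h2 := Metric.mem_ball.1 hxy
          rw [Metric.mem_ball]
          calc dist z x ≤ dist z y + dist y x := dist_triangle _ _ _
          _ < δ / 2 + δ / 2 := by linarith [dist_comm x y ▸ h2]
          _ = δ := by ring
        calc m ≤ ζ (Metric.ball y (δ / 2)) := Finset.inf'_le _ hy
        _ ≤ ζ (Metric.ball x δ) := measure_mono hsub'
    refine ⟨fun δ => if h : 0 < δ then (key δ h).choose else 1, ?_, ?_⟩
    · intro δ hδ
      dsimp only
      rw [dif_pos hδ]
      exact (key δ hδ).choose_spec.1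
    · intro x hx δ hδ
      dsimp only
      rw [dif_pos hδ]
      exact (key δ hδ).choose_spec.2 x hx
  · rintro ⟨f, hfpos, hf⟩
    by_contra hb
    rw [isBounded_iff_forall_norm_le] at hb
    push_neg at hb
    choose X hXmem hXnorm using hb
    set g : ℕ → EuclideanSpace ℝ (Fin d) :=
      fun n => Nat.rec (X 0) (fun _ y => X (‖y‖ + 3)) n with hg
    have hgmem : ∀ n, g n ∈ msupport ζ := by
      intro n
      cases n with
      | zero => exact hXmem 0
      | succ k => exact hXmem _
    have hgstep : ∀ n, ‖g n‖ + 3 < ‖g (n + 1)‖ := fun n => hXnorm _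
    have hgmono : ∀ m n, m < n → ‖g m‖ + 3 ≤ ‖g n‖ := by
      intro m n hmn
      induction n with
      | zero => omega
      | succ k ih =>
        rcases Nat.lt_succ_iff_lt_or_eq.1 hmn with h | rfl
        · have := hgstep k
          have := ih h
          linarith [norm_nonneg (g k)]
        · exact (hgstep m).le
    have hdisj : Pairwise (Function.onFun Disjoint (fun n => Metric.ball (g n) 1)) := by
      intro m n hmn
      have hd : (2 : ℝ) ≤ dist (g m) (g n) := by
        rcases hmn.lt_or_gt with h | h
        · have := hgmono m n h
          calc (2:ℝ) ≤ ‖g n‖ - ‖g m‖ := by linarith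
          _ ≤ ‖g n - g m‖ := by
              have := norm_sub_norm_le (g n) (g m); linarith
          _ = dist (g m) (g n) := by rw [dist_eq_norm, norm_sub_rev]
        · have := hgmono n m h
          calc (2:ℝ) ≤ ‖g m‖ - ‖g n‖ := by linarith
          _ ≤ ‖g m - g n‖ := by
              have := norm_sub_norm_le (g m) (g n); linarith
          _ = dist (g m) (g n) := by rw [dist_eq_norm]
      exact Metric.ball_disjoint_ball (by linarith)
    have hmeas : ζ (⋃ n, Metric.ball (g n) 1) = ∑' n, ζ (Metric.ball (g n) 1) :=
      measure_iUnion hdisj (fun n => measurableSet_ball)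
    have hlow : ∀ n, ENNReal.ofReal (f 1) ≤ ζ (Metric.ball (g n) 1) :=
      fun n => hf (g n) (hgmem n) 1 one_pos
    have htop : (⊤ : ENNReal) ≤ ∑' n, ζ (Metric.ball (g n) 1) := by
      calc (⊤ : ENNReal) = ∑' _ : ℕ, ENNReal.ofReal (f 1) := by
            rw [ENNReal.tsum_const_eq_top_of_ne_zero]
            simp [ENNReal.ofReal_eq_zero, not_le, hfpos 1 one_pos]
      _ ≤ _ := ENNReal.tsum_le_tsum hlow
    have : ζ (⋃ n, Metric.ball (g n) 1) ≤ 1 := prob_le_one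
    rw [hmeas] at this
    exact absurd (le_trans htop this) (by simp)
end
end

section
/- Fix N ≥ 3, 1 ≤ K ≤ N−2, and a probability distribution ζ on ℝ^d. Let S ⊂ ℝ^d be a bounded set with P(ζ ∈ S) > 0 and let ε₁ > 0; set ε₂ = ε₁/(4(N−K)²). Then there exists a constant σ > 0, depending only on ε₁, S, K and N, such that for any N−K points x_1,…,x_{N−K} ∈ (supp ζ) ∩ S with G_{N−K}(x_1,…,x_{N−K}) > ε₁, if ζ_1,…,ζ_K are i.i.d. with distribution ζ, then the probability that the minimum of G_{N−K} over all (N−K)-element submultisets of {ζ_1,…,ζ_K, x_1,…,x_{N−K}} is strictly less than G_{N−K}(x_1,…,x_{N−K}) − ε₂ is at least σ. -/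
open MeasureTheory Filter Metric

noncomputable section

/-!
`2n · G_n(x)` is the sum of all squared pairwise distances `‖x_k - x_l‖²`. Take a pair
`x_i, x_j` at maximal distance, so `‖x_i - x_j‖² ≥ 2 G_n(x) / n > 2 ε₁ / n`, labelled so that
the row sum `∑_l ‖x_i - x_l‖²` is at most that of `x_j`. Replacing `x_j` by a point `z` with
`‖z - x_i‖ ≤ δ` then lowers `2n · G_n` by about `2 ‖x_i - x_j‖²`, hence lowers `G_n` by more than
`ε₂` once `δ` is small in terms of `ε₁`, `n` and a bound on `S`. A fresh sample lands within `δ`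
of `x_i` with probability bounded below independently of `x`: `S` is covered by finitely many
`δ/2`-balls, and each of them that contains a point of `supp ζ` has positive mass.
-/

section PairSums

variable {ι : Type*} [Fintype ι]

lemma sum_sum_eq_erase [DecidableEq ι] (g : ι → ι → ℝ) (j : ι) :
    ∑ k, ∑ l, g k l = g j j + ∑ l ∈ Finset.univ.erase j, (g j l + g l j)
      + ∑ k ∈ Finset.univ.erase j, ∑ l ∈ Finset.univ.erase j, g k l := by
  simp only [← Finset.add_sum_erase _ _ (Finset.mem_univ j), Finset.sum_add_distrib]
  ring

lemma sum_sum_update_of_symm [DecidableEq ι] {α : Type*} (f : α → α → ℝ)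
    (hf : ∀ a b, f a b = f b a) (y : ι → α) (j : ι) (z : α) :
    ∑ k, ∑ l, f (Function.update y j z k) (Function.update y j z l) =
      ∑ k, ∑ l, f (y k) (y l) + 2 * ∑ l ∈ Finset.univ.erase j, (f z (y l) - f (y j) (y l))
        + (f z z - f (y j) (y j)) := by
  have key : ∀ w, ∑ k, ∑ l, f (Function.update y j w k) (Function.update y j w l) =
      f w w + 2 * ∑ l ∈ Finset.univ.erase j, f w (y l)
        + ∑ k ∈ Finset.univ.erase j, ∑ l ∈ Finset.univ.erase j, f (y k) (y l) := by
    intro w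
    have off : ∀ k ∈ Finset.univ.erase j, Function.update y j w k = y k := fun k hk =>
      Function.update_of_ne (Finset.ne_of_mem_erase hk) w y
    have row : ∑ l ∈ Finset.univ.erase j, (f w (Function.update y j w l)
        + f (Function.update y j w l) w) = ∑ l ∈ Finset.univ.erase j, 2 * f w (y l) :=
      Finset.sum_congr rfl fun l hl => by rw [off l hl, hf (y l), two_mul]
    have rest : ∑ k ∈ Finset.univ.erase j, ∑ l ∈ Finset.univ.erase j,
        f (Function.update y j w k) (Function.update y j w l) =
        ∑ k ∈ Finset.univ.erase j, ∑ l ∈ Finset.univ.erase j, f (y k) (y l) :=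
      Finset.sum_congr rfl fun k hk => Finset.sum_congr rfl fun l hl => by rw [off k hk, off l hl]
    rw [sum_sum_eq_erase, Finset.mul_sum, Function.update_self, row, rest]
  have key_self := key (y j)
  rw [Function.update_eq_self] at key_self
  rw [key, key_self, Finset.sum_sub_distrib]
  ring

lemma exists_sum_le_sum_and_sum_sum_le [Nonempty ι] (f : ι → ι → ℝ)
    (hf : ∀ k l, f k l = f l k) :
    ∃ i j, ∑ l, f i l ≤ ∑ l, f j l ∧ ∑ k, ∑ l, f k l ≤ Fintype.card ι ^ 2 * f i j := by
  obtain ⟨p, hp⟩ := Finite.exists_max fun p : ι × ι => f p.1 p.2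
  have hsum : ∑ k, ∑ l, f k l ≤ Fintype.card ι ^ 2 * f p.1 p.2 := by
    calc ∑ k, ∑ l, f k l ≤ ∑ _k : ι, ∑ _l : ι, f p.1 p.2 :=
          Finset.sum_le_sum fun k _ => Finset.sum_le_sum fun l _ => hp (k, l)
      _ = _ := by simp only [Finset.sum_const, Finset.card_univ, nsmul_eq_mul]; ring
  rcases le_total (∑ l, f p.1 l) (∑ l, f p.2 l) with h | h
  · exact ⟨p.1, p.2, h, hsum⟩
  · exact ⟨p.2, p.1, h, hf p.1 p.2 ▸ hsum⟩

end PairSums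

lemma List.ofFn_update_le_add {α : Type*} {n : ℕ} (x : Fin n → α) (j : Fin n) {a : α}
    {s : Multiset α} (ha : a ∈ s) :
    (↑(List.ofFn (Function.update x j a)) : Multiset α) ≤ ↑(List.ofFn x) + s := by
  classical
  rw [← Fin.univ_val_map, ← Fin.univ_val_map, ← Multiset.cons_erase (Finset.mem_univ_val j),
    Multiset.map_cons, Multiset.map_cons, Function.update_self]
  set M := Multiset.map x (Finset.univ.val.erase j)
  have hM : Multiset.map (Function.update x j a) (Finset.univ.val.erase j) = M :=
    Multiset.map_congr rfl fun k hk =>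
      Function.update_of_ne (Finset.univ.nodup.mem_erase_iff.mp hk).1 a x
  rw [hM]
  calc a ::ₘ M ≤ M + s := by
        rw [← Multiset.singleton_add, add_comm]
        exact add_le_add_right (Multiset.singleton_le.mpr ha) M
    _ ≤ x j ::ₘ M + s := add_le_add_left (Multiset.le_cons_self M (x j)) s

lemma norm_sub_sq_le_norm_sub_sq_add {E : Type*} [SeminormedAddCommGroup E] {x z w : E}
    {δ r : ℝ} (hzx : ‖z - x‖ ≤ δ) (hxw : ‖x - w‖ ≤ r) :
    ‖z - w‖ ^ 2 ≤ ‖x - w‖ ^ 2 + δ * (δ + 2 * r) := by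
  have htri := norm_sub_le_norm_sub_add_norm_sub z x w
  nlinarith [norm_nonneg (z - x), norm_nonneg (x - w), norm_nonneg (z - w)]

lemma energy_ofFn {E : Type*} [NormedAddCommGroup E] [NormedSpace ℝ E] {n : ℕ}
    (y : Fin n → E) :
    energy (↑(List.ofFn y) : Multiset E) = ∑ k, ‖y k - (n : ℝ)⁻¹ • ∑ l, y l‖ ^ 2 := by
  simp [energy, List.sum_ofFn, Function.comp_def]

section Energy

variable {E : Type*} [NormedAddCommGroup E] [InnerProductSpace ℝ E]

lemma sum_sum_norm_sub_sq {ι : Type*} [Fintype ι] (a : ι → E) :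
    ∑ k, ∑ l, ‖a k - a l‖ ^ 2 = 2 * Fintype.card ι * ∑ k, ‖a k‖ ^ 2 - 2 * ‖∑ k, a k‖ ^ 2 := by
  simp only [norm_sub_sq_real, Finset.sum_add_distrib, Finset.sum_sub_distrib, ← Finset.mul_sum,
    ← inner_sum, ← sum_inner, real_inner_self_eq_norm_sq, Finset.sum_const, Finset.card_univ,
    nsmul_eq_mul]
  ring

lemma two_mul_mul_energy_ofFn {n : ℕ} (y : Fin n → E) :
    2 * n * energy (↑(List.ofFn y) : Multiset E) = ∑ k, ∑ l, ‖y k - y l‖ ^ 2 := by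
  rcases Nat.eq_zero_or_pos n with rfl | hn
  · simp
  set m : E := (n : ℝ)⁻¹ • ∑ l, y l
  have hm : ∑ k, (y k - m) = 0 := by
    rw [Finset.sum_sub_distrib, Finset.sum_const, Finset.card_univ, Fintype.card_fin,
      ← Nat.cast_smul_eq_nsmul ℝ, smul_smul, mul_inv_cancel₀ (by positivity), one_smul, sub_self]
  have hcentred := sum_sum_norm_sub_sq fun k => y k - m
  simp only [sub_sub_sub_cancel_right, hm, norm_zero, Fintype.card_fin] at hcentred
  rw [hcentred, energy_ofFn]
  ring

lemma mul_energy_update_le {n : ℕ} (y : Fin n → E) {i j : Fin n} {z : E} {η : ℝ} (hη : 0 ≤ η)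
    (hij : ∑ l, ‖y i - y l‖ ^ 2 ≤ ∑ l, ‖y j - y l‖ ^ 2)
    (hz : ∀ l, ‖z - y l‖ ^ 2 ≤ ‖y i - y l‖ ^ 2 + η) :
    n * energy (↑(List.ofFn (Function.update y j z)) : Multiset E) ≤
      n * energy (↑(List.ofFn y) : Multiset E) - ‖y i - y j‖ ^ 2 + n * η := by
  have hpair := sum_sum_update_of_symm (fun a b : E => ‖a - b‖ ^ 2)
    (fun a b => by rw [norm_sub_rev]) y j z
  rw [← two_mul_mul_energy_ofFn, ← two_mul_mul_energy_ofFn] at hpair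
  have hrow : ∑ l ∈ Finset.univ.erase j, ‖z - y l‖ ^ 2 ≤
      ∑ l ∈ Finset.univ.erase j, (‖y i - y l‖ ^ 2 + η) :=
    Finset.sum_le_sum fun l _ => hz l
  simp only [Finset.sum_sub_distrib, Finset.sum_add_distrib, Finset.sum_const, Finset.card_univ,
    Fintype.card_fin, nsmul_eq_mul, Finset.sum_erase_eq_sub (Finset.mem_univ j), sub_self,
    norm_zero] at hpair hrow
  linarith

lemma exists_update_energy_lt {n : ℕ} (y : Fin n → E) {R ε δ : ℝ} (hy : ∀ k, ‖y k‖ ≤ R)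
    (hε : 0 ≤ ε) (hG : ε < energy (↑(List.ofFn y) : Multiset E))
    (hδ : δ * (δ + 4 * R) ≤ ε / (4 * n ^ 2)) :
    ∃ i j : Fin n, ∀ z : E, ‖z - y i‖ ≤ δ →
      energy (↑(List.ofFn (Function.update y j z)) : Multiset E) <
        energy (↑(List.ofFn y) : Multiset E) - ε / (4 * n ^ 2) := by
  have hn : 0 < n := Nat.pos_of_ne_zero <| by rintro rfl; simp [energy] at hG; linarith
  have : Nonempty (Fin n) := ⟨⟨0, hn⟩⟩
  obtain ⟨i, j, hij, hfar⟩ := exists_sum_le_sum_and_sum_sum_le (fun k l => ‖y k - y l‖ ^ 2)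
    fun k l => by rw [norm_sub_rev]
  rw [← two_mul_mul_energy_ofFn, Fintype.card_fin] at hfar
  refine ⟨i, j, fun z hz => ?_⟩
  set G := energy (↑(List.ofFn y) : Multiset E)
  set e := ε / (4 * n ^ 2)
  have hnpos : (0 : ℝ) < n := Nat.cast_pos.mpr hn
  have hε_eq : ε = 4 * n ^ 2 * e := by simp only [e]; field_simp
  have he : 0 ≤ e := by positivity
  have hR : 0 ≤ R := (norm_nonneg _).trans (hy i)
  have hδ0 : 0 ≤ δ := (norm_nonneg _).trans hz
  have hfar' : 8 * n * e < ‖y i - y j‖ ^ 2 := by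
    refine lt_of_mul_lt_mul_left (a := (n : ℝ) ^ 2) ?_ (by positivity)
    nlinarith
  have hupd := mul_energy_update_le y (by positivity) hij fun l =>
    norm_sub_sq_le_norm_sub_sq_add hz ((norm_sub_le _ _).trans (add_le_add (hy i) (hy l)))
  refine lt_of_mul_lt_mul_left (a := (n : ℝ)) ?_ hnpos.le
  nlinarith

end Energy

lemma TotallyBounded.exists_forall_ofReal_le_measure_ball {X : Type*} [PseudoMetricSpace X]
    [MeasurableSpace X] (ζ : Measure X) {S : Set X} (hS : TotallyBounded S) {δ : ℝ}
    (hδ : 0 < δ) : ∃ σ > (0 : ℝ), ∀ x ∈ msupport ζ ∩ S, ENNReal.ofReal σ ≤ ζ (ball x δ) := by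
  classical
  obtain ⟨t, htfin, hcov⟩ := totallyBounded_iff.mp hS (δ / 2) (half_pos hδ)
  set F := htfin.toFinset.filter fun y => 0 < ζ (ball y (δ / 2))
  set m := F.inf fun y => ζ (ball y (δ / 2))
  have hm : 0 < min m 1 := lt_min ((Finset.lt_inf_iff ENNReal.zero_lt_top).mpr fun y hy =>
    (Finset.mem_filter.mp hy).2) one_pos
  refine ⟨(min m 1).toReal, ENNReal.toReal_pos hm.ne' (by simp), ?_⟩
  rintro x ⟨hsupp, hxS⟩
  obtain ⟨y, hyt, hxy⟩ := Set.mem_iUnion₂.mp (hcov hxS)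
  rw [mem_ball] at hxy
  have hyF : y ∈ F := Finset.mem_filter.mpr ⟨htfin.mem_toFinset.mpr hyt,
    (hsupp _ (sub_pos.mpr hxy)).trans_le (measure_mono (ball_subset_ball' (by linarith)))⟩
  calc ENNReal.ofReal (min m 1).toReal = min m 1 := ENNReal.ofReal_toReal (by simp)
    _ ≤ m := min_le_left _ _
    _ ≤ ζ (ball y (δ / 2)) := Finset.inf_le hyF
    _ ≤ ζ (ball x δ) := measure_mono (ball_subset_ball' (by rw [dist_comm]; linarith))

theorem stmt5_general {d N K : ℕ} (hK1 : 1 ≤ K) (hK2 : K ≤ N - 2)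
    (ζ : Measure (EuclideanSpace ℝ (Fin d))) [IsProbabilityMeasure ζ]
    (S : Set (EuclideanSpace ℝ (Fin d))) (hSbdd : Bornology.IsBounded S)
    (ε₁ : ℝ) (hε₁ : 0 < ε₁) :
    ∃ σ > (0 : ℝ), ∀ x : Fin (N - K) → EuclideanSpace ℝ (Fin d),
      (∀ i, x i ∈ msupport ζ ∩ S) →
      ε₁ < energy (↑(List.ofFn x) : Multiset (EuclideanSpace ℝ (Fin d))) →
      ENNReal.ofReal σ ≤
        (Measure.pi fun _ : Fin K => ζ)
          {z : Fin K → EuclideanSpace ℝ (Fin d) |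
            ∃ s : Multiset (EuclideanSpace ℝ (Fin d)),
              s ≤ ↑(List.ofFn x) + ↑(List.ofFn z) ∧ s.card = N - K ∧
              energy s < energy (↑(List.ofFn x) : Multiset (EuclideanSpace ℝ (Fin d))) -
                ε₁ / (4 * ((N : ℝ) - K) ^ 2)} := by
  obtain ⟨R, hR, hSR⟩ := hSbdd.exists_pos_norm_le
  have hn : (0 : ℝ) < (N - K : ℕ) := by exact_mod_cast (by omega : 0 < N - K)
  rw [← Nat.cast_sub (by omega : K ≤ N)]
  set e := ε₁ / (4 * ((N - K : ℕ) : ℝ) ^ 2)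
  set δ := min 1 (e / (1 + 4 * R))
  have hδ : 0 < δ := lt_min one_pos (by positivity)
  have hδe : δ * (δ + 4 * R) ≤ e :=
    calc δ * (δ + 4 * R) ≤ e / (1 + 4 * R) * (1 + 4 * R) := by
          gcongr
          exacts [min_le_right _ _, min_le_left _ _]
      _ = e := div_mul_cancel₀ _ (by positivity)
  obtain ⟨σ, hσ, hσball⟩ := (hSbdd.isCompact_closure.totallyBounded.subset
    subset_closure).exists_forall_ofReal_le_measure_ball ζ hδ
  refine ⟨σ, hσ, fun x hx hG => ?_⟩
  obtain ⟨i, j, hlower⟩ := exists_update_energy_lt x (fun k => hSR _ (hx k).2) hε₁.le hG hδe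
  let i₀ : Fin K := ⟨0, hK1⟩
  calc ENNReal.ofReal σ ≤ ζ (ball (x i) δ) := hσball _ (hx i)
    _ = Measure.pi (fun _ : Fin K => ζ) (Function.eval i₀ ⁻¹' ball (x i) δ) :=
        ((measurePreserving_eval (fun _ : Fin K => ζ) i₀).measure_preimage
          measurableSet_ball.nullMeasurableSet).symm
    _ ≤ _ := measure_mono fun z (hz : z i₀ ∈ ball (x i) δ) =>
        show ∃ s, _ from ⟨_, List.ofFn_update_le_add x j (by simp), by simp,
          hlower _ (mem_ball_iff_norm.mp hz).le⟩

/-- Given a bounded set `S` with `ζ(S) > 0` and `ε₁ > 0`, with `ε₂ = ε₁/(4(N-K)²)`, there is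
`σ > 0` (depending only on `ε₁, S, K, N`) such that for any `N-K` points of `supp ζ ∩ S` of
energy `> ε₁`, with probability at least `σ` the `K` freshly sampled i.i.d. `ζ`-points produce
a configuration whose minimal `(N-K)`-point energy is below the old energy minus `ε₂`. -/
theorem stmt5 {d N K : ℕ} (hN : 3 ≤ N) (hK1 : 1 ≤ K) (hK2 : K ≤ N - 2)
    (ζ : Measure (EuclideanSpace ℝ (Fin d))) [IsProbabilityMeasure ζ]
    (S : Set (EuclideanSpace ℝ (Fin d))) (hSbdd : Bornology.IsBounded S)
    (hSmeas : MeasurableSet S) (hSpos : 0 < ζ S) (ε₁ : ℝ) (hε₁ : 0 < ε₁) :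
    ∃ σ > (0 : ℝ), ∀ x : Fin (N - K) → EuclideanSpace ℝ (Fin d),
      (∀ i, x i ∈ msupport ζ ∩ S) →
      ε₁ < energy (↑(List.ofFn x) : Multiset (EuclideanSpace ℝ (Fin d))) →
      ENNReal.ofReal σ ≤
        (Measure.pi fun _ : Fin K => ζ)
          {z : Fin K → EuclideanSpace ℝ (Fin d) |
            ∃ s : Multiset (EuclideanSpace ℝ (Fin d)),
              s ≤ ↑(List.ofFn x) + ↑(List.ofFn z) ∧ s.card = N - K ∧
              energy s < energy (↑(List.ofFn x) : Multiset (EuclideanSpace ℝ (Fin d))) -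
                ε₁ / (4 * ((N : ℝ) - K) ^ 2)} :=
  stmt5_general hK1 hK2 ζ S hSbdd ε₁ hε₁
end
end

section
/- Suppose the local regularity assumption holds for ζ. Then for every compact subset A ⊆ supp ζ and every δ ∈ (0,1) there exist r_A > 0 and σ_A > 0 such that A is regular with parameters δ, σ_A, r_A. -/
open MeasureTheory Filter Metric

noncomputable section

/-- `A ⊆ supp ζ` is regular with parameters `δ ∈ (0,1)`, `σ > 0`, `r₀ > 0` if
`P(ζ ∈ B_{rδ}(x) | ζ ∈ B_r(x)) ≥ σ` for every `x ∈ A` and every `0 < r ≤ r₀`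
(stated multiplicatively, which also covers the case `ζ(B_r(x)) = 0`). -/
def JanteRegular {E : Type*} [PseudoMetricSpace E] [MeasurableSpace E]
    (ζ : Measure E) (A : Set E) (δ σ r₀ : ℝ) : Prop :=
  ∀ x ∈ A, ∀ r : ℝ, 0 < r → r ≤ r₀ →
    ENNReal.ofReal σ * ζ (Metric.ball x r) ≤ ζ (Metric.ball x (δ * r))

/-- Local regularity assumption: every point of `supp ζ` has a ball around it whose
intersection with `supp ζ` is regular for some choice of parameters. -/
def JanteLocallyRegular {E : Type*} [PseudoMetricSpace E] [MeasurableSpace E]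
    (ζ : Measure E) : Prop :=
  ∀ x ∈ msupport ζ, ∃ γ > (0 : ℝ), ∃ δ ∈ Set.Ioo (0 : ℝ) 1, ∃ σ > (0 : ℝ), ∃ r₀ > (0 : ℝ),
    JanteRegular ζ (Metric.ball x γ ∩ msupport ζ) δ σ r₀

/-- Iterating regularity. -/
lemma jante_iter {E : Type*} [PseudoMetricSpace E] [MeasurableSpace E]
    (ζ : Measure E) (S : Set E) {δ' σ' r₀ : ℝ} (hδ' : δ' ∈ Set.Ioo (0 : ℝ) 1)
    (hσ'0 : 0 ≤ σ')
    (h : JanteRegular ζ S δ' σ' r₀) (n : ℕ) :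
    JanteRegular ζ S (δ' ^ n) (σ' ^ n) r₀ := by
  induction n with
  | zero =>
    intro x hx r hr0 hrle
    simp
  | succ n ih =>
    intro x hx r hr0 hrle
    have hδn1 : δ' ^ n ≤ 1 := pow_le_one₀ hδ'.1.le hδ'.2.le
    have hδnpos : 0 < δ' ^ n := pow_pos hδ'.1 n
    have h1 := ih x hx r hr0 hrle
    have h2 := h x hx (δ' ^ n * r) (mul_pos hδnpos hr0)
      (le_trans (mul_le_of_le_one_left hr0.le hδn1) hrle)
    calc ENNReal.ofReal (σ' ^ (n + 1)) * ζ (Metric.ball x r)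
        = ENNReal.ofReal σ' * (ENNReal.ofReal (σ' ^ n) * ζ (Metric.ball x r)) := by
          rw [ENNReal.ofReal_pow hσ'0, pow_succ, ENNReal.ofReal_pow hσ'0, mul_comm
            ((ENNReal.ofReal σ') ^ n), mul_assoc]
      _ ≤ ENNReal.ofReal σ' * ζ (Metric.ball x (δ' ^ n * r)) :=
          mul_le_mul_right h1 _
      _ ≤ ζ (Metric.ball x (δ' * (δ' ^ n * r))) := h2
      _ = ζ (Metric.ball x (δ' ^ (n + 1) * r)) := by ring_nf

/-- Changing the `δ` parameter of regularity. -/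
lemma jante_change_delta {E : Type*} [PseudoMetricSpace E] [MeasurableSpace E]
    (ζ : Measure E) (S : Set E) {δ' σ' r₀ δ : ℝ} (hδ' : δ' ∈ Set.Ioo (0 : ℝ) 1)
    (hσ' : 0 < σ') (hδ : δ ∈ Set.Ioo (0 : ℝ) 1)
    (h : JanteRegular ζ S δ' σ' r₀) :
    ∃ σ > (0 : ℝ), JanteRegular ζ S δ σ r₀ := by
  obtain ⟨n, hn⟩ := exists_pow_lt_of_lt_one hδ.1 hδ'.2
  refine ⟨σ' ^ n, pow_pos hσ' n, ?_⟩
  intro x hx r hr0 hrle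
  refine le_trans (jante_iter ζ S hδ' hσ'.le h n x hx r hr0 hrle) ?_
  exact measure_mono (Metric.ball_subset_ball (by nlinarith [hδ.1]))

/-- Under the local regularity assumption, for every compact `A ⊆ supp ζ` and every
`δ ∈ (0,1)` there are `r₀ > 0` and `σ > 0` such that `A` is regular with parameters
`δ, σ, r₀`. -/
theorem stmt8 {d : ℕ} (ζ : Measure (EuclideanSpace ℝ (Fin d))) [IsProbabilityMeasure ζ]
    (hreg : JanteLocallyRegular ζ) (A : Set (EuclideanSpace ℝ (Fin d)))
    (hA : A ⊆ msupport ζ) (hAcomp : IsCompact A) (δ : ℝ) (hδ : δ ∈ Set.Ioo (0 : ℝ) 1) :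
    ∃ r₀ > (0 : ℝ), ∃ σ > (0 : ℝ), JanteRegular ζ A δ σ r₀ := by
  rcases A.eq_empty_or_nonempty with rfl | hAne
  · exact ⟨1, one_pos, 1, one_pos, fun x hx => absurd hx (Set.notMem_empty x)⟩
  -- local data at each point, with δ already fixed
  have key : ∀ x : EuclideanSpace ℝ (Fin d), x ∈ A →
      ∃ γ > (0 : ℝ), ∃ σ > (0 : ℝ), ∃ r₀ > (0 : ℝ),
        JanteRegular ζ (Metric.ball x γ ∩ msupport ζ) δ σ r₀ := by
    intro x hx
    obtain ⟨γ, hγ, δ', hδ', σ', hσ', r₀, hr₀, h⟩ := hreg x (hA hx)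
    obtain ⟨σ, hσ, h2⟩ := jante_change_delta ζ _ hδ' hσ' hδ h
    exact ⟨γ, hγ, σ, hσ, r₀, hr₀, h2⟩
  classical
  choose! γ hγ σ hσ r₀ hr₀ hloc using key
  obtain ⟨t, hts, hcov⟩ := hAcomp.elim_nhds_subcover (fun x => Metric.ball x (γ x))
    (fun x hx => Metric.ball_mem_nhds x (hγ x hx))
  have htne : t.Nonempty := by
    obtain ⟨a, ha⟩ := hAne
    obtain ⟨x, hxt, _⟩ := Set.mem_iUnion₂.1 (hcov ha)
    exact ⟨x, hxt⟩
  refine ⟨t.inf' htne r₀, ?_, t.inf' htne σ, ?_, ?_⟩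
  · exact (Finset.lt_inf'_iff htne).2 fun x hx => hr₀ x (hts x hx)
  · exact (Finset.lt_inf'_iff htne).2 fun x hx => hσ x (hts x hx)
  · intro y hy r hr0 hrle
    obtain ⟨x, hxt, hyx⟩ := Set.mem_iUnion₂.1 (hcov hy)
    have h1 := hloc x (hts x hxt) y ⟨hyx, hA hy⟩ r hr0
      (le_trans hrle (Finset.inf'_le _ hxt))
    refine le_trans (mul_le_mul_left ?_ _) h1
    exact ENNReal.ofReal_le_ofReal (Finset.inf'_le _ hxt)
end
end

section
/- Let ζ be a real random variable, C ≥ 0 and R_+ ∈ ℝ, and suppose P(a+u < ζ ≤ a+2u) ≤ C·P(a < ζ ≤ a+u) for every a ≥ R_+ and every u > 0. Then for all real numbers a, b, c with R_+ ≤ a < b < c, one has P(ζ ∈ (b,c]) ≤ Σ_{k=1}^{⌈(c−a)/(b−a)⌉} C^{k−1} · P(ζ ∈ (a,b]). -/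
open MeasureTheory Filter

noncomputable section

/-- If a real random variable `ζ` satisfies
`P(a+u < ζ ≤ a+2u) ≤ C·P(a < ζ ≤ a+u)` for every `a ≥ R₊` and `u > 0`, then for all
`R₊ ≤ a < b < c` one has
`P(ζ ∈ (b,c]) ≤ ∑_{k=1}^{⌈(c-a)/(b-a)⌉} C^{k-1} · P(ζ ∈ (a,b])`. -/
theorem stmt11 {Ω : Type*} [MeasurableSpace Ω] (P : Measure Ω) [IsProbabilityMeasure P]
    (ζ : Ω → ℝ) (hζ : Measurable ζ) (C Rp : ℝ) (hC : 0 ≤ C)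
    (h : ∀ a ≥ Rp, ∀ u > (0 : ℝ),
      P (ζ ⁻¹' Set.Ioc (a + u) (a + 2 * u)) ≤
        ENNReal.ofReal C * P (ζ ⁻¹' Set.Ioc a (a + u))) :
    ∀ a b c : ℝ, Rp ≤ a → a < b → b < c →
      P (ζ ⁻¹' Set.Ioc b c) ≤
        ∑ k ∈ Finset.range ⌈(c - a) / (b - a)⌉₊,
          ENNReal.ofReal C ^ k * P (ζ ⁻¹' Set.Ioc a b) := by
  intro a b c ha hab hbc
  set u : ℝ := b - a with hu_def
  have hu : 0 < u := by simp [hu_def]; linarith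
  set N : ℕ := ⌈(c - a) / u⌉₊ with hN
  have hb : b = a + u := by ring
  -- key estimate by induction
  have key : ∀ k : ℕ, P (ζ ⁻¹' Set.Ioc (a + k * u) (a + (k + 1) * u)) ≤
      ENNReal.ofReal C ^ k * P (ζ ⁻¹' Set.Ioc a b) := by
    intro k
    induction k with
    | zero => simp [hb]
    | succ k ih =>
      have hk0 : (0 : ℝ) ≤ (k : ℝ) * u := by positivity
      have h1 := h (a + k * u) (by linarith) u hu
      have e1 : a + (k : ℝ) * u + u = a + ((k : ℕ) + 1 : ℕ) * u := by push_cast; ring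
      have e2 : a + (k : ℝ) * u + 2 * u = a + (((k : ℕ) + 1 : ℕ) + 1) * u := by
        push_cast; ring
      rw [e1, e2] at h1
      calc P (ζ ⁻¹' Set.Ioc (a + ((k : ℕ) + 1 : ℕ) * u) (a + (((k : ℕ) + 1 : ℕ) + 1) * u))
          ≤ ENNReal.ofReal C * P (ζ ⁻¹' Set.Ioc (a + k * u) (a + ((k : ℕ) + 1 : ℕ) * u)) := by
            convert h1 using 4 <;> push_cast <;> ring
        _ ≤ ENNReal.ofReal C * (ENNReal.ofReal C ^ k * P (ζ ⁻¹' Set.Ioc a b)) := by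
            exact mul_le_mul_right (by convert ih using 4; push_cast; ring) _
        _ = ENNReal.ofReal C ^ (k + 1) * P (ζ ⁻¹' Set.Ioc a b) := by ring
  -- covering
  have cover : ζ ⁻¹' Set.Ioc b c ⊆
      ⋃ k ∈ Finset.Ico 1 N, ζ ⁻¹' Set.Ioc (a + k * u) (a + (k + 1) * u) := by
    intro x hx
    simp only [Set.mem_preimage, Set.mem_Ioc] at hx
    obtain ⟨hx1, hx2⟩ := hx
    set m : ℕ := ⌈(ζ x - a) / u⌉₊ with hm
    have hr1 : (1 : ℝ) < (ζ x - a) / u := by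
      rw [lt_div_iff₀ hu]; linarith
    have hm2 : 2 ≤ m := by
      have : (1 : ℕ) < m := by
        rw [hm, Nat.lt_ceil]; exact_mod_cast hr1
      omega
    have hmN : m ≤ N := by
      apply Nat.ceil_le_ceil
      gcongr <;> linarith
    simp only [Set.mem_iUnion, Finset.mem_Ico, Set.mem_preimage, Set.mem_Ioc]
    refine ⟨m - 1, ⟨by omega, by omega⟩, ?_, ?_⟩
    · have : ((m - 1 : ℕ) : ℝ) < (ζ x - a) / u := by
        rw [← Nat.lt_ceil]; omega
      rw [lt_div_iff₀ hu] at this; linarith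
    · have hle : (ζ x - a) / u ≤ (m : ℝ) := Nat.le_ceil _
      rw [div_le_iff₀ hu] at hle
      have h1m : 1 ≤ m := by omega
      have : ((m - 1 : ℕ) : ℝ) + 1 = (m : ℝ) := by
        push_cast [Nat.cast_sub h1m]; ring
      rw [this]; linarith
  calc P (ζ ⁻¹' Set.Ioc b c)
      ≤ P (⋃ k ∈ Finset.Ico 1 N, ζ ⁻¹' Set.Ioc (a + k * u) (a + (k + 1) * u)) :=
        measure_mono cover
    _ ≤ ∑ k ∈ Finset.Ico 1 N, P (ζ ⁻¹' Set.Ioc (a + k * u) (a + (k + 1) * u)) :=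
        measure_biUnion_finset_le _ _
    _ ≤ ∑ k ∈ Finset.Ico 1 N, ENNReal.ofReal C ^ k * P (ζ ⁻¹' Set.Ioc a b) :=
        Finset.sum_le_sum fun k _ => key k
    _ ≤ ∑ k ∈ Finset.range N, ENNReal.ofReal C ^ k * P (ζ ⁻¹' Set.Ioc a b) := by
        rw [Finset.range_eq_Ico]
        exact Finset.sum_le_sum_of_subset (Finset.Ico_subset_Ico (Nat.zero_le _) le_rfl)
end
end

section
/- Let ζ be a real random variable satisfying the assumption of at most exponential oscillations in the tails with constants R_+, R_− ∈ ℝ and C ≥ 0. Then P(ζ = x) = 0 for every x ∈ (−∞, R_−) ∪ (R_+, ∞). -/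
/-!
An atom at `x` is dominated, up to the factor `C`, by the mass of a one-sided window next to `x`
of width `|u|`: for `x > R₊` take `a = x - 2u`, for `x < R₋` take `a = x - u` with `u < 0`.
As `u → 0` these windows shrink to the empty set, so their mass, and hence the atom, vanishes.
-/

open MeasureTheory Filter Topology Set

namespace MeasureTheory.Measure

variable (μ : Measure ℝ) [IsFiniteMeasureOnCompacts μ]

theorem tendsto_measure_Icc_diff_singleton_nhdsGT (x : ℝ) :
    Tendsto (fun r ↦ μ (Icc (x - r) (x + r) \ {x})) (𝓝[>] 0) (𝓝 0) := by
  have hx : μ {x} ≠ ⊤ := isCompact_singleton.measure_ne_top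
  have h := ENNReal.Tendsto.sub (tendsto_measure_Icc_nhdsWithin_right' μ x)
    (tendsto_const_nhds (x := μ {x})) (Or.inr hx)
  rw [tsub_self] at h
  refine h.congr' ?_
  filter_upwards [self_mem_nhdsWithin] with r (hr : 0 < r)
  have hmem : x ∈ Icc (x - r) (x + r) := ⟨by linarith, by linarith⟩
  rw [measure_sdiff (singleton_subset_iff.2 hmem) (measurableSet_singleton x).nullMeasurableSet hx]

variable {μ}

theorem measure_singleton_eq_zero_of_le_mul_measure_Icc_diff {x : ℝ} {c : ENNReal} (hc : c ≠ ⊤)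
    (h : ∀ᶠ r in 𝓝[>] 0, μ {x} ≤ c * μ (Icc (x - r) (x + r) \ {x})) : μ {x} = 0 := by
  have hlim := ENNReal.Tendsto.const_mul (tendsto_measure_Icc_diff_singleton_nhdsGT μ x)
    (Or.inr hc)
  rw [mul_zero] at hlim
  exact nonpos_iff_eq_zero.1 (ge_of_tendsto hlim h)

theorem measure_singleton_eq_zero_of_upper_tail {R x : ℝ} {c : ENNReal} (hc : c ≠ ⊤)
    (htail : ∀ a ≥ R, ∀ u > (0 : ℝ), μ (Ioc (a + u) (a + 2 * u)) ≤ c * μ (Ioc a (a + u)))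
    (hx : R < x) : μ {x} = 0 := by
  refine measure_singleton_eq_zero_of_le_mul_measure_Icc_diff hc ?_
  filter_upwards [Ioo_mem_nhdsGT (sub_pos.2 hx)] with r ⟨hr0, hr⟩
  have h := htail (x - r) (by linarith) (r / 2) (by positivity)
  rw [show x - r + r / 2 = x - r / 2 by ring, show x - r + 2 * (r / 2) = x by ring] at h
  calc μ {x} ≤ μ (Ioc (x - r / 2) x) :=
        measure_mono (singleton_subset_iff.2 ⟨by linarith, le_rfl⟩)
    _ ≤ c * μ (Ioc (x - r) (x - r / 2)) := h
    _ ≤ c * μ (Icc (x - r) (x + r) \ {x}) := by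
        gcongr
        intro y ⟨hy₁, hy₂⟩
        exact ⟨⟨hy₁.le, by linarith⟩, fun hyx ↦ by rw [mem_singleton_iff] at hyx; linarith⟩

theorem measure_singleton_eq_zero_of_lower_tail {R x : ℝ} {c : ENNReal} (hc : c ≠ ⊤)
    (htail : ∀ a ≤ R, ∀ u < (0 : ℝ), μ (Ioc (a + 2 * u) (a + u)) ≤ c * μ (Ioc (a + u) a))
    (hx : x < R) : μ {x} = 0 := by
  refine measure_singleton_eq_zero_of_le_mul_measure_Icc_diff hc ?_
  filter_upwards [Ioo_mem_nhdsGT (sub_pos.2 hx)] with r ⟨hr0, hr⟩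
  have h := htail (x + r) (by linarith) (-r) (by linarith)
  rw [show x + r + 2 * -r = x - r by ring, show x + r + -r = x by ring] at h
  calc μ {x} ≤ μ (Ioc (x - r) x) :=
        measure_mono (singleton_subset_iff.2 ⟨by linarith, le_rfl⟩)
    _ ≤ c * μ (Ioc x (x + r)) := h
    _ ≤ c * μ (Icc (x - r) (x + r) \ {x}) := by
        gcongr
        intro y ⟨hy₁, hy₂⟩
        exact ⟨⟨by linarith, hy₂⟩, fun hyx ↦ by rw [mem_singleton_iff] at hyx; linarith⟩

end MeasureTheory.Measure

theorem stmt12_general {Ω : Type*} [MeasurableSpace Ω] (P : Measure Ω) [IsProbabilityMeasure P]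
    (ζ : Ω → ℝ) (hζ : Measurable ζ) (C Rp Rm : ℝ)
    (hplus : ∀ a ≥ Rp, ∀ u > (0 : ℝ),
      P (ζ ⁻¹' Set.Ioc (a + u) (a + 2 * u)) ≤
        ENNReal.ofReal C * P (ζ ⁻¹' Set.Ioc a (a + u)))
    (hminus : ∀ a ≤ Rm, ∀ u < (0 : ℝ),
      P (ζ ⁻¹' Set.Ioc (a + 2 * u) (a + u)) ≤
        ENNReal.ofReal C * P (ζ ⁻¹' Set.Ioc (a + u) a)) :
    ∀ x : ℝ, x < Rm ∨ Rp < x → P (ζ ⁻¹' {x}) = 0 := by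
  have hlaw : ∀ s, MeasurableSet s → P (ζ ⁻¹' s) = P.map ζ s :=
    fun s hs ↦ (Measure.map_apply hζ hs).symm
  intro x hx
  rw [hlaw _ (measurableSet_singleton x)]
  rcases hx with hx | hx
  · refine Measure.measure_singleton_eq_zero_of_lower_tail (ENNReal.ofReal_ne_top (r := C))
      (fun a ha u hu ↦ ?_) hx
    simpa only [hlaw _ measurableSet_Ioc] using hminus a ha u hu
  · refine Measure.measure_singleton_eq_zero_of_upper_tail (ENNReal.ofReal_ne_top (r := C))
      (fun a ha u hu ↦ ?_) hx
    simpa only [hlaw _ measurableSet_Ioc] using hplus a ha u hu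

/-- If a real random variable `ζ` has at most exponential oscillations in the tails, with
constants `R₊, R₋ ∈ ℝ` and `C ≥ 0`, then `P(ζ = x) = 0` for every
`x ∈ (-∞, R₋) ∪ (R₊, ∞)`. -/
theorem stmt12 {Ω : Type*} [MeasurableSpace Ω] (P : Measure Ω) [IsProbabilityMeasure P]
    (ζ : Ω → ℝ) (hζ : Measurable ζ) (C Rp Rm : ℝ) (hC : 0 ≤ C)
    (hplus : ∀ a ≥ Rp, ∀ u > (0 : ℝ),
      P (ζ ⁻¹' Set.Ioc (a + u) (a + 2 * u)) ≤
        ENNReal.ofReal C * P (ζ ⁻¹' Set.Ioc a (a + u)))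
    (hminus : ∀ a ≤ Rm, ∀ u < (0 : ℝ),
      P (ζ ⁻¹' Set.Ioc (a + 2 * u) (a + u)) ≤
        ENNReal.ofReal C * P (ζ ⁻¹' Set.Ioc (a + u) a)) :
    ∀ x : ℝ, x < Rm ∨ Rp < x → P (ζ ⁻¹' {x}) = 0 :=
  stmt12_general P ζ hζ C Rp Rm hplus hminus
end
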